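/- The stochastic platoon coordination game G^s admits at least one pure Nash equilibrium: there exists w* ∈ W = W^1 × ⋯ × W^N such that for every vehicle i and every w_i ∈ W^i, U^i(w*_i, w*_{-i}) ≥ U^i(w_i, w*_{-i}), where U^i(w) = Σ_τ Pr(𝛕=τ) U^i(w,τ) is the expected utility. -/
import Mathlib


open scoped BigOperators

/-- Departure time of a vehicle from its `(k+1)`-st node (`0`-indexed `k`):
`d 0 = t0 + w 0`, `d (k+1) = d k + tt (path k) (d k) + w (k+1)`. -/
def depart {E : Type*} (tt : E → ℕ → ℕ) (t0 : ℕ) (path : ℕ → E) (w : ℕ → ℕ) : ℕ → ℕ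
  | 0 => t0 + w 0
  | k + 1 => depart tt t0 path w k + tt (path k) (depart tt t0 path w k) + w (k + 1)

/-- The platoon set `C(e,t,w,τ)`: vehicles entering edge `e` at time instance `t`. -/
def platoon {E ι : Type*} (len : ι → ℕ) (path : ι → ℕ → E)
    (tt : E → ℕ → ℕ) (t0 : ι → ℕ) (w : ι → ℕ → ℕ) (e : E) (t : ℕ) : Set ι :=
  {j | ∃ k < len j, path j k = e ∧ depart tt (t0 j) (path j) (w j) k = t}

/-- Vehicle `i`'s utility: total platooning reward along its path minus waiting cost. -/
noncomputable def utility {E ι : Type*} (len : ι → ℕ) (path : ι → ℕ → E)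
    (tt : E → ℕ → ℕ) (t0 : ι → ℕ) (R : ℕ → E → ℝ) (Λ : ι → (ℕ → ℕ) → ℝ)
    (w : ι → ℕ → ℕ) (i : ι) : ℝ :=
  (∑ k ∈ Finset.range (len i),
      R ((platoon len path tt t0 w (path i k)
            (depart tt (t0 i) (path i) (w i) k)).ncard) (path i k))
    - Λ i (w i)

/-- `r(n,e) = ∑_{j=1}^{n} R(j,e)`; in particular `r(0,e) = 0`. -/
noncomputable def rsum {E : Type*} (R : ℕ → E → ℝ) (n : ℕ) (e : E) : ℝ :=
  ∑ j ∈ Finset.Icc 1 n, R j e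

/-- The candidate potential
`Φ(w,τ) = ∑_{t∈ℕ} ∑_{e∈E} r(|C(e,t,w,τ)|,e) - ∑_i Λ_i(wⁱ)`. -/
noncomputable def potential {E ι : Type*} [Fintype E] [Fintype ι]
    (len : ι → ℕ) (path : ι → ℕ → E) (tt : E → ℕ → ℕ) (t0 : ι → ℕ)
    (R : ℕ → E → ℝ) (Λ : ι → (ℕ → ℕ) → ℝ) (w : ι → ℕ → ℕ) : ℝ :=
  (∑' t : ℕ, ∑ e : E, rsum R ((platoon len path tt t0 w e t).ncard) e)
    - ∑ i : ι, Λ i (w i)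

open Classical

set_option linter.unusedSectionVars false

section helpers
variable {E ι : Type*} [Fintype E] [Fintype ι] [DecidableEq ι]
variable (len : ι → ℕ) (path : ι → ℕ → E) (tt : E → ℕ → ℕ) (t0 : ι → ℕ)

lemma depart_strictMono (htt : ∀ e t, 0 < tt e t) (a : ℕ) (p : ℕ → E) (w : ℕ → ℕ) :
    StrictMono (depart tt a p w) := by
  apply strictMono_nat_of_lt_succ
  intro k
  have h := htt (p k) (depart tt a p w k)
  show depart tt a p w k < depart tt a p w k + tt (p k) (depart tt a p w k) + w (k + 1)
  omega

lemma rsum_zero (R : ℕ → E → ℝ) (e : E) : rsum R 0 e = 0 := by simp [rsum]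

lemma rsum_succ (R : ℕ → E → ℝ) (n : ℕ) (e : E) :
    rsum R (n + 1) e = rsum R n e + R (n + 1) e := by
  rw [rsum, rsum, Finset.sum_Icc_succ_top (by omega)]

lemma rsum_ncard_split (R : ℕ → E → ℝ) (e : E) (i : ι) (S : Set ι) :
    rsum R S.ncard e
      = rsum R ((S \ {i}).ncard) e + (if i ∈ S then R S.ncard e else 0) := by
  by_cases h : i ∈ S
  · have h1 : (S \ {i}).ncard + 1 = S.ncard :=
      Set.ncard_diff_singleton_add_one h (Set.toFinite S)
    rw [if_pos h, ← h1, rsum_succ]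
  · rw [if_neg h, Set.diff_singleton_eq_self h, add_zero]

lemma platoon_diff_update (w : ι → ℕ → ℕ) (i : ι) (wi : ℕ → ℕ) (e : E) (t : ℕ) :
    platoon len path tt t0 w e t \ {i}
      = platoon len path tt t0 (Function.update w i wi) e t \ {i} := by
  ext j
  by_cases hj : j = i
  · simp [hj]
  · simp only [Set.mem_diff, Set.mem_singleton_iff, hj, not_false_iff, and_true,
      platoon, Set.mem_setOf_eq, Function.update_of_ne hj]

/-- All departure times occurring along any vehicle's path, for profile `w`. -/
def Dset (w : ι → ℕ → ℕ) : Finset ℕ :=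
  Finset.univ.biUnion fun j =>
    (Finset.range (len j)).image fun k => depart tt (t0 j) (path j) (w j) k

lemma depart_mem_Dset (w : ι → ℕ → ℕ) (j : ι) (k : ℕ) (hk : k < len j) :
    depart tt (t0 j) (path j) (w j) k ∈ Dset len path tt t0 w :=
  Finset.mem_biUnion.mpr ⟨j, Finset.mem_univ j,
    Finset.mem_image.mpr ⟨k, Finset.mem_range.mpr hk, rfl⟩⟩

lemma platoon_eq_empty (w : ι → ℕ → ℕ) (e : E) (t : ℕ)
    (ht : t ∉ Dset len path tt t0 w) :
    platoon len path tt t0 w e t = ∅ := by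
  ext j
  simp only [platoon, Set.mem_setOf_eq, Set.mem_empty_iff_false, iff_false]
  rintro ⟨k, hk, -, hd⟩
  exact ht (hd ▸ depart_mem_Dset len path tt t0 w j k hk)

lemma sum_indicator_eq (htt : ∀ e t, 0 < tt e t) (w : ι → ℕ → ℕ) (i : ι)
    (g : E → ℕ → ℝ) (s : Finset ℕ)
    (hs : ∀ k < len i, depart tt (t0 i) (path i) (w i) k ∈ s) :
    (∑ t ∈ s, ∑ e : E,
        (if i ∈ platoon len path tt t0 w e t then g e t else 0))
      = ∑ k ∈ Finset.range (len i), g (path i k) (depart tt (t0 i) (path i) (w i) k) := by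
  classical
  have hmono : StrictMono (depart tt (t0 i) (path i) (w i)) :=
    depart_strictMono tt htt _ _ _
  rw [← Finset.sum_product' s Finset.univ
    (fun t e => if i ∈ platoon len path tt t0 w e t then g e t else 0)]
  rw [← Finset.sum_filter (fun p : ℕ × E => i ∈ platoon len path tt t0 w p.2 p.1)
    (fun p : ℕ × E => g p.2 p.1)]
  refine (Finset.sum_bij
    (fun k (hk : k ∈ Finset.range (len i)) =>
      ((depart tt (t0 i) (path i) (w i) k, path i k) : ℕ × E))
    ?_ ?_ ?_ ?_).symm
  · intro k hk
    rw [Finset.mem_filter]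
    refine ⟨Finset.mem_product.mpr ⟨hs k (Finset.mem_range.mp hk), Finset.mem_univ _⟩, ?_⟩
    exact ⟨k, Finset.mem_range.mp hk, rfl, rfl⟩
  · intro k1 h1 k2 h2 heq
    exact hmono.injective (congrArg Prod.fst heq)
  · rintro ⟨t, e⟩ hp
    rw [Finset.mem_filter] at hp
    obtain ⟨-, k, hk, he, hd⟩ := hp
    exact ⟨k, Finset.mem_range.mpr hk, by simp [hd, he]⟩
  · intro k hk; rfl

lemma potential_eq_sum (R : ℕ → E → ℝ) (Λ : ι → (ℕ → ℕ) → ℝ) (w : ι → ℕ → ℕ)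
    (s : Finset ℕ) (hs : Dset len path tt t0 w ⊆ s) :
    potential len path tt t0 R Λ w
      = (∑ t ∈ s, ∑ e : E, rsum R ((platoon len path tt t0 w e t).ncard) e)
        - ∑ i : ι, Λ i (w i) := by
  unfold potential
  congr 1
  refine tsum_eq_sum ?_
  intro t ht
  have hemp : ∀ e : E, platoon len path tt t0 w e t = ∅ := fun e =>
    platoon_eq_empty len path tt t0 w e t (fun h => ht (hs h))
  refine Finset.sum_eq_zero fun e _ => ?_
  rw [hemp e, Set.ncard_empty, rsum_zero]

/-- Key exact-potential identity: a unilateral deviation of vehicle `i` changes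
the potential by exactly the change of `i`'s utility. -/
lemma util_diff_eq_pot_diff (htt : ∀ e t, 0 < tt e t)
    (R : ℕ → E → ℝ) (Λ : ι → (ℕ → ℕ) → ℝ) (w : ι → ℕ → ℕ) (i : ι) (wi : ℕ → ℕ) :
    utility len path tt t0 R Λ w i
        - utility len path tt t0 R Λ (Function.update w i wi) i
      = potential len path tt t0 R Λ w
        - potential len path tt t0 R Λ (Function.update w i wi) := by
  classical
  set w' := Function.update w i wi with hw'
  set s : Finset ℕ := Dset len path tt t0 w ∪ Dset len path tt t0 w' with hsdef
  rw [potential_eq_sum len path tt t0 R Λ w s Finset.subset_union_left,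
      potential_eq_sum len path tt t0 R Λ w' s Finset.subset_union_right]
  have hΛ : (∑ j : ι, Λ j (w j)) - ∑ j : ι, Λ j (w' j) = Λ i (w i) - Λ i (w' i) := by
    rw [← Finset.sum_sub_distrib]
    rw [Finset.sum_eq_single i]
    · intro j _ hj
      rw [hw', Function.update_of_ne hj, sub_self]
    · intro h; exact absurd (Finset.mem_univ i) h
  have hrew :
      (∑ t ∈ s, ∑ e : E, rsum R ((platoon len path tt t0 w e t).ncard) e)
        - ∑ t ∈ s, ∑ e : E, rsum R ((platoon len path tt t0 w' e t).ncard) e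
      = (∑ k ∈ Finset.range (len i),
            R ((platoon len path tt t0 w (path i k)
              (depart tt (t0 i) (path i) (w i) k)).ncard) (path i k))
        - ∑ k ∈ Finset.range (len i),
            R ((platoon len path tt t0 w' (path i k)
              (depart tt (t0 i) (path i) (w' i) k)).ncard) (path i k) := by
    rw [← Finset.sum_sub_distrib]
    have hpt : ∀ t ∈ s,
        (∑ e : E, rsum R ((platoon len path tt t0 w e t).ncard) e)
          - ∑ e : E, rsum R ((platoon len path tt t0 w' e t).ncard) e
        = (∑ e : E, (if i ∈ platoon len path tt t0 w e t
              then R ((platoon len path tt t0 w e t).ncard) e else 0))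
          - ∑ e : E, (if i ∈ platoon len path tt t0 w' e t
              then R ((platoon len path tt t0 w' e t).ncard) e else 0) := by
      intro t _
      rw [← Finset.sum_sub_distrib, ← Finset.sum_sub_distrib]
      refine Finset.sum_congr rfl fun e _ => ?_
      rw [rsum_ncard_split R e i (platoon len path tt t0 w e t),
          rsum_ncard_split R e i (platoon len path tt t0 w' e t),
          platoon_diff_update len path tt t0 w i wi e t]
      ring
    rw [Finset.sum_congr rfl hpt, Finset.sum_sub_distrib]
    rw [sum_indicator_eq len path tt t0 htt w i
        (fun e t => R ((platoon len path tt t0 w e t).ncard) e) s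
        (fun k hk => Finset.subset_union_left (depart_mem_Dset len path tt t0 w i k hk)),
      sum_indicator_eq len path tt t0 htt w' i
        (fun e t => R ((platoon len path tt t0 w' e t).ncard) e) s
        (fun k hk => Finset.subset_union_right (depart_mem_Dset len path tt t0 w' i k hk))]
  unfold utility
  linarith [hΛ, hrew]
end helpers

/-- **Theorem 2 (existence of a pure Nash equilibrium, stochastic travel times).**
The stochastic platoon coordination game, in which each vehicle maximizes its
expected utility `Uⁱ(w) = ∑_τ Pr(𝛕 = τ) Uⁱ(w,τ)`, admits at least one pure Nash
equilibrium. -/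
theorem stochastic_platoon_game_has_pure_NE
    {E ι T : Type*} [Fintype E] [Fintype ι] [DecidableEq ι] [Fintype T]
    (p : T → ℝ) (hp : ∀ τ, 0 ≤ p τ) (hpsum : ∑ τ : T, p τ = 1)
    (len : ι → ℕ) (path : ι → ℕ → E)
    (tt : T → E → ℕ → ℕ) (htt : ∀ τ e t, 0 < tt τ e t) (t0 : T → ι → ℕ)
    (R : ℕ → E → ℝ) (Λ : ι → (ℕ → ℕ) → ℝ)
    (W : ι → Finset (ℕ → ℕ)) (hW : ∀ i, (W i).Nonempty) :
    ∃ wstar : ι → ℕ → ℕ, (∀ j, wstar j ∈ W j) ∧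
      ∀ i : ι, ∀ wi ∈ W i,
        (∑ τ : T, p τ * utility len path (tt τ) (t0 τ) R Λ wstar i)
          ≥ ∑ τ : T, p τ * utility len path (tt τ) (t0 τ) R Λ (Function.update wstar i wi) i := by
  classical
  obtain ⟨wstar, hmem, hmax⟩ := Finset.exists_max_image (Fintype.piFinset W)
    (fun w => ∑ τ : T, p τ * potential len path (tt τ) (t0 τ) R Λ w)
    ⟨fun i => (hW i).choose, Fintype.mem_piFinset.mpr fun i => (hW i).choose_spec⟩
  refine ⟨wstar, fun j => Fintype.mem_piFinset.mp hmem j, ?_⟩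
  intro i wi hwi
  set w' := Function.update wstar i wi with hw'
  have hmem' : w' ∈ Fintype.piFinset W := Fintype.mem_piFinset.mpr fun j => by
    by_cases hj : j = i
    · subst hj; simpa [hw'] using hwi
    · rw [hw', Function.update_of_ne hj]
      exact Fintype.mem_piFinset.mp hmem j
  have hF := hmax w' hmem'
  have key : ∀ τ : T,
      p τ * utility len path (tt τ) (t0 τ) R Λ wstar i
          - p τ * utility len path (tt τ) (t0 τ) R Λ w' i
        = p τ * potential len path (tt τ) (t0 τ) R Λ wstar
          - p τ * potential len path (tt τ) (t0 τ) R Λ w' := by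
    intro τ
    have h := util_diff_eq_pot_diff len path (tt τ) (t0 τ) (htt τ) R Λ wstar i wi
    rw [← mul_sub, ← mul_sub, ← hw'] at *
    rw [h]
  have hsum : (∑ τ : T, p τ * utility len path (tt τ) (t0 τ) R Λ wstar i)
        - ∑ τ : T, p τ * utility len path (tt τ) (t0 τ) R Λ w' i
      = (∑ τ : T, p τ * potential len path (tt τ) (t0 τ) R Λ wstar)
        - ∑ τ : T, p τ * potential len path (tt τ) (t0 τ) R Λ w' := by
    rw [← Finset.sum_sub_distrib, ← Finset.sum_sub_distrib]
    exact Finset.sum_congr rfl fun τ _ => key τ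
  linarith [hF, hsum]
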